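/- Let E be a finite-dimensional real inner product space, T : E → E an iso-averaged linear map, and P the orthogonal projection onto Fix T := {x : T x = x}. Then for every θ ∈ (0, 2), every k ∈ ℕ and every x ∈ E: (i) ‖T^k x − P x‖ ≤ ‖T_θ^k x − P x‖ (the relaxation parameter θ = 1 is optimal), and (ii) ‖T_θ^k x − P x‖ = ‖T_{2−θ}^k x − P x‖ (the distances to the limit point for parameters θ and 2 − θ coincide). -/

import Mathlib

/-- The fixed-point subspace `Fix T = {x : T x = x}` of a linear endomorphism. -/
noncomputable def fixedSubspace {E : Type*} [NormedAddCommGroup E]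
    [InnerProductSpace ℝ E] (T : E →ₗ[ℝ] E) : Submodule ℝ E :=
  LinearMap.eqLocus T LinearMap.id

/-- The orthogonal projection onto `Fix T`, viewed as an endomorphism of `E`. -/
noncomputable def fixedProjection {E : Type*} [NormedAddCommGroup E]
    [InnerProductSpace ℝ E] [FiniteDimensional ℝ E] (T : E →ₗ[ℝ] E) : E →ₗ[ℝ] E :=
  (fixedSubspace T).subtype ∘ₗ (Submodule.orthogonalProjection (fixedSubspace T)).toLinearMap

section Aux

open LinearMap

variable {E : Type*} [NormedAddCommGroup E] [InnerProductSpace ℝ E] [FiniteDimensional ℝ E]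

local notation "⟪" x ", " y "⟫" => @inner ℝ _ _ x y

lemma aux_adjoint_relax (T : E →ₗ[ℝ] E) (c : ℝ) :
    adjoint (c • T + (1 - c) • (1 : E →ₗ[ℝ] E))
      = c • adjoint T + (1 - c) • (1 : E →ₗ[ℝ] E) := by
  have h1 : adjoint (1 : E →ₗ[ℝ] E) = 1 := by
    rw [← LinearMap.star_eq_adjoint, star_one]
  rw [map_add, map_smul, map_smul, h1]

lemma aux_normal (T : E →ₗ[ℝ] E)
    (hiso : (2 : ℝ) • (adjoint T ∘ₗ T) = T + adjoint T) :
    T * adjoint T = adjoint T * T := by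
  set T' := adjoint T with hT'
  have hmul : (2:ℝ) • (T' * T) = T + T' := hiso
  have expand : ∀ A B : E →ₗ[ℝ] E,
      ((2:ℝ) • A - 1) * ((2:ℝ) • B - 1)
        = (2:ℝ) • ((2:ℝ) • (A * B)) - (2:ℝ) • A - (2:ℝ) • B + 1 := by
    intro A B
    simp only [sub_mul, mul_sub, smul_mul_assoc, mul_smul_comm, one_mul, mul_one]
    module
  have h1 : ((2:ℝ) • T' - 1) * ((2:ℝ) • T - 1) = 1 := by
    rw [expand, hmul]
    module
  have h2 : ((2:ℝ) • T - 1) * ((2:ℝ) • T' - 1) = 1 :=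
    mul_eq_one_comm.mp h1
  rw [expand] at h1 h2
  have h4 : (4:ℝ) • (T * T') = (4:ℝ) • (T' * T) := by
    linear_combination (norm := module) h2 - h1
  exact smul_right_injective (E →ₗ[ℝ] E) (by norm_num : (4:ℝ) ≠ 0) h4

lemma aux_normsq (B : E →ₗ[ℝ] E) (hn : B * adjoint B = adjoint B * B) (k : ℕ) :
    ∀ y : E, ‖(B ^ k) y‖ ^ 2 = ⟪((adjoint B * B) ^ k) y, y⟫ := by
  have hc : (adjoint B * B) * adjoint B = adjoint B * (adjoint B * B) := by
    rw [mul_assoc, hn]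
  have hcm : Commute (adjoint B * B) (adjoint B) := hc
  induction k with
  | zero => intro y; simp [real_inner_self_eq_norm_sq]
  | succ k ih =>
    intro y
    have hop : adjoint B * ((adjoint B * B) ^ k * B) = (adjoint B * B) ^ (k + 1) := by
      rw [← mul_assoc, ← ((hcm.pow_left k).eq), mul_assoc, ← pow_succ]
    calc ‖(B ^ (k+1)) y‖ ^ 2 = ‖(B ^ k) (B y)‖ ^ 2 := by
          rw [pow_succ B k, Module.End.mul_apply]
      _ = ⟪((adjoint B * B) ^ k) (B y), B y⟫ := ih (B y)
      _ = ⟪adjoint B (((adjoint B * B) ^ k) (B y)), y⟫ :=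
          (LinearMap.adjoint_inner_left B _ _).symm
      _ = ⟪((adjoint B * B) ^ (k+1)) y, y⟫ := by
          rw [← hop]; simp [Module.End.mul_apply]

lemma aux_quad (A : E →ₗ[ℝ] E) (hA : A.IsSymmetric) {n : ℕ}
    (b : OrthonormalBasis (Fin n) ℝ E) (a : Fin n → ℝ)
    (hab : ∀ i, A (b i) = a i • b i) (k : ℕ) (y : E) :
    ⟪(A ^ k) y, y⟫ = ∑ i, a i ^ k * ⟪b i, y⟫ ^ 2 := by
  have hpow : ∀ i, (A ^ k) (b i) = (a i ^ k) • b i := by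
    intro i
    induction k with
    | zero => simp
    | succ k ih =>
      rw [pow_succ A k, Module.End.mul_apply, hab, map_smul, ih, smul_smul, ← pow_succ']
  have hsym : (A ^ k).IsSymmetric := hA.pow k
  calc ⟪(A ^ k) y, y⟫ = ∑ i, ⟪(A ^ k) y, b i⟫ * ⟪b i, y⟫ :=
        (b.sum_inner_mul_inner _ _).symm
    _ = ∑ i, a i ^ k * ⟪b i, y⟫ ^ 2 := by
        refine Finset.sum_congr rfl fun i _ => ?_
        rw [hsym y (b i), hpow i, real_inner_smul_right, real_inner_comm y (b i)]
        ring

end Aux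

/-- Let `T` be iso-averaged and `P` the orthogonal projection onto
`Fix T`. For every `θ ∈ (0, 2)`, `k ∈ ℕ` and `x ∈ E`:
(i) `‖T^k x - P x‖ ≤ ‖T_θ^k x - P x‖` (the parameter `θ = 1` is optimal), and
(ii) `‖T_θ^k x - P x‖ = ‖T_{2-θ}^k x - P x‖`. -/
theorem relaxation_optimal_and_symmetric {E : Type*} [NormedAddCommGroup E]
    [InnerProductSpace ℝ E] [FiniteDimensional ℝ E] (T : E →ₗ[ℝ] E)
    (hiso : (2 : ℝ) • (LinearMap.adjoint T ∘ₗ T) = T + LinearMap.adjoint T)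
    (θ : ℝ) (hθ : θ ∈ Set.Ioo (0 : ℝ) 2) (k : ℕ) (x : E) :
    ‖(T ^ k) x - fixedProjection T x‖ ≤
        ‖((θ • T + (1 - θ) • LinearMap.id : E →ₗ[ℝ] E) ^ k) x - fixedProjection T x‖ ∧
      ‖((θ • T + (1 - θ) • LinearMap.id : E →ₗ[ℝ] E) ^ k) x - fixedProjection T x‖ =
        ‖(((2 - θ) • T + (1 - (2 - θ)) • LinearMap.id : E →ₗ[ℝ] E) ^ k) x -
          fixedProjection T x‖ := by
  classical
  open LinearMap in
  -- pointwise versions of the hypotheses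
  have hisox : ∀ z : E, (2:ℝ) • (adjoint T) (T z) = T z + (adjoint T) z := by
    intro z
    have := congrArg (fun f : E →ₗ[ℝ] E => f z) hiso
    simpa using this
  have hnormal : T * adjoint T = adjoint T * T := aux_normal T hiso
  have hGsym : (adjoint T ∘ₗ T).IsSymmetric := by
    intro u v
    rw [LinearMap.comp_apply, LinearMap.comp_apply, LinearMap.adjoint_inner_left,
      ← LinearMap.adjoint_inner_right]
  have hGx : ∀ z : E, @inner ℝ _ _ ((adjoint T ∘ₗ T) z) z = ‖T z‖ ^ 2 := by
    intro z
    rw [LinearMap.comp_apply, LinearMap.adjoint_inner_left, real_inner_self_eq_norm_sq]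
  have hTcontr : ∀ z : E, ‖T z‖ ≤ ‖z‖ := by
    intro z
    have h1 : ‖T z‖ ^ 2 = @inner ℝ _ _ (T z) z := by
      have h2 := congrArg (fun w => @inner ℝ _ _ w z) (hisox z)
      simp only [inner_smul_left, inner_add_left, RCLike.star_def, map_ofNat,
        conj_trivial] at h2
      have h3 : @inner ℝ _ _ ((adjoint T) (T z)) z = ‖T z‖ ^ 2 := hGx z
      have h4 : @inner ℝ _ _ ((adjoint T) z) z = @inner ℝ _ _ (T z) z := by
        rw [LinearMap.adjoint_inner_left, real_inner_comm]
      nlinarith [h2, h3, h4]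
    have h5 := real_inner_le_norm (T z) z
    nlinarith [norm_nonneg (T z), norm_nonneg z]
  -- the product expansions
  have hM : ∀ c : ℝ, adjoint (c • T + (1-c) • (1 : E →ₗ[ℝ] E)) * (c • T + (1-c) • 1)
      = (c*(2-c)) • (adjoint T ∘ₗ T) + ((1-c)^2) • 1 := by
    intro c
    rw [aux_adjoint_relax]
    ext z
    simp only [Module.End.mul_apply, LinearMap.add_apply, LinearMap.smul_apply,
      Module.End.one_apply, LinearMap.comp_apply, map_add, map_smul]
    linear_combination (norm := module) (-(c*(1-c))) • (hisox z)
  have hMcomm : ∀ c : ℝ, (c • T + (1-c) • (1 : E →ₗ[ℝ] E)) * adjoint (c • T + (1-c) • 1)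
      = adjoint (c • T + (1-c) • (1 : E →ₗ[ℝ] E)) * (c • T + (1-c) • 1) := by
    intro c
    rw [aux_adjoint_relax]
    ext z
    have hnz : T ((adjoint T) z) = (adjoint T) (T z) := by
      have := congrArg (fun f : E →ₗ[ℝ] E => f z) hnormal
      simpa using this
    simp only [Module.End.mul_apply, LinearMap.add_apply, LinearMap.smul_apply,
      Module.End.one_apply, map_add, map_smul]
    linear_combination (norm := module) (c^2) • hnz
  -- eigenbasis of G = adjoint T ∘ T
  set n := Module.finrank ℝ E with hn
  have hrank : Module.finrank ℝ E = n := rfl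
  set b := hGsym.eigenvectorBasis hrank with hb
  set μ := hGsym.eigenvalues hrank with hμ
  have happly : ∀ i, (adjoint T ∘ₗ T) (b i) = μ i • b i := by
    intro i
    exact_mod_cast hGsym.apply_eigenvectorBasis hrank i
  have hbnorm : ∀ i, ‖b i‖ = 1 := fun i => b.orthonormal.1 i
  have hμval : ∀ i, μ i = ‖T (b i)‖ ^ 2 := by
    intro i
    have h1 := hGx (b i)
    rw [happly i, real_inner_smul_left] at h1
    have h2 : @inner ℝ _ _ (b i) (b i) = 1 := by
      rw [real_inner_self_eq_norm_sq, hbnorm i]; norm_num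
    rw [h2] at h1
    simpa using h1
  have hμ0 : ∀ i, 0 ≤ μ i := fun i => by rw [hμval i]; positivity
  have hμ1 : ∀ i, μ i ≤ 1 := by
    intro i
    rw [hμval i]
    have := hTcontr (b i)
    rw [hbnorm i] at this
    nlinarith [norm_nonneg (T (b i))]
  -- the key norm formula
  have key : ∀ (c : ℝ) (y : E), ‖((c • T + (1-c) • (1 : E →ₗ[ℝ] E)) ^ k) y‖ ^ 2
      = ∑ i, (c*(2-c) * μ i + (1-c)^2) ^ k * (@inner ℝ _ _ (b i) y) ^ 2 := by
    intro c y
    have h1 := aux_normsq (c • T + (1-c) • (1 : E →ₗ[ℝ] E)) (hMcomm c) k y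
    rw [hM c] at h1
    rw [h1]
    have hAsym : ((c*(2-c)) • (adjoint T ∘ₗ T) + ((1-c)^2) • (1 : E →ₗ[ℝ] E)).IsSymmetric := by
      intro u v
      simp only [LinearMap.add_apply, LinearMap.smul_apply, Module.End.one_apply,
        inner_add_left, inner_add_right, real_inner_smul_left, real_inner_smul_right]
      rw [hGsym u v]
    exact aux_quad _ hAsym b _ (fun i => by
      simp only [LinearMap.add_apply, LinearMap.smul_apply, Module.End.one_apply, happly i,
        smul_smul]
      module) k y
  -- fixed point facts
  have hPfix : T (fixedProjection T x) = fixedProjection T x := by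
    have hmem : fixedProjection T x ∈ fixedSubspace T := by
      simp only [fixedProjection, LinearMap.comp_apply]
      exact SetLike.coe_mem _
    rw [fixedSubspace, LinearMap.mem_eqLocus] at hmem
    simpa using hmem
  have hBfix : ∀ (c : ℝ) (m : ℕ),
      ((c • T + (1-c) • (1 : E →ₗ[ℝ] E)) ^ m) (fixedProjection T x) = fixedProjection T x := by
    intro c m
    have hBp : (c • T + (1-c) • (1 : E →ₗ[ℝ] E)) (fixedProjection T x) = fixedProjection T x := by
      simp only [LinearMap.add_apply, LinearMap.smul_apply, Module.End.one_apply, hPfix]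
      module
    induction m with
    | zero => simp
    | succ m ih => rw [pow_succ, Module.End.mul_apply, hBp, ih]
  have hdiff : ∀ c : ℝ,
      ((c • T + (1-c) • (1 : E →ₗ[ℝ] E)) ^ k) x - fixedProjection T x
        = ((c • T + (1-c) • (1 : E →ₗ[ℝ] E)) ^ k) (x - fixedProjection T x) := by
    intro c
    rw [map_sub, hBfix c k]
  have hT1 : ((1:ℝ) • T + (1-(1:ℝ)) • (1 : E →ₗ[ℝ] E)) = T := by
    simp
  set y := x - fixedProjection T x with hy
  -- squared norms of the three iterates
  have L1 : ‖(T ^ k) x - fixedProjection T x‖ ^ 2 = ∑ i, (μ i) ^ k * (@inner ℝ _ _ (b i) y) ^ 2 := by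
    have h1 := hdiff 1
    rw [hT1] at h1
    rw [h1]
    have h2 := key 1 y
    rw [hT1] at h2
    rw [h2]
    norm_num
  have Lθ : ∀ c : ℝ, ((c • T + (1-c) • LinearMap.id : E →ₗ[ℝ] E) ^ k) x - fixedProjection T x
      = ((c • T + (1-c) • (1 : E →ₗ[ℝ] E)) ^ k) y := fun c => hdiff c
  constructor
  · -- (i)
    have hsqle : ‖(T ^ k) x - fixedProjection T x‖ ^ 2
        ≤ ‖((θ • T + (1-θ) • (1 : E →ₗ[ℝ] E)) ^ k) y‖ ^ 2 := by
      rw [L1, key θ y]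
      refine Finset.sum_le_sum fun i _ => ?_
      have hbase : μ i ≤ θ*(2-θ) * μ i + (1-θ)^2 := by
        nlinarith [hμ0 i, hμ1 i, sq_nonneg (1-θ)]
      exact mul_le_mul_of_nonneg_right (pow_le_pow_left₀ (hμ0 i) hbase k) (sq_nonneg _)
    rw [show ((θ • T + (1 - θ) • LinearMap.id : E →ₗ[ℝ] E) ^ k) x - fixedProjection T x
        = ((θ • T + (1-θ) • (1 : E →ₗ[ℝ] E)) ^ k) y from Lθ θ]
    nlinarith [norm_nonneg ((T ^ k) x - fixedProjection T x),
      norm_nonneg (((θ • T + (1-θ) • (1 : E →ₗ[ℝ] E)) ^ k) y), hsqle]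
  · -- (ii)
    rw [show ((θ • T + (1 - θ) • LinearMap.id : E →ₗ[ℝ] E) ^ k) x - fixedProjection T x
        = ((θ • T + (1-θ) • (1 : E →ₗ[ℝ] E)) ^ k) y from Lθ θ,
      show (((2-θ) • T + (1 - (2-θ)) • LinearMap.id : E →ₗ[ℝ] E) ^ k) x - fixedProjection T x
        = (((2-θ) • T + (1-(2-θ)) • (1 : E →ₗ[ℝ] E)) ^ k) y from Lθ (2-θ)]
    have hsq : ‖((θ • T + (1-θ) • (1 : E →ₗ[ℝ] E)) ^ k) y‖ ^ 2
        = ‖(((2-θ) • T + (1-(2-θ)) • (1 : E →ₗ[ℝ] E)) ^ k) y‖ ^ 2 := by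
      rw [key θ y, key (2-θ) y]
      refine Finset.sum_congr rfl fun i _ => ?_
      ring_nf
    have h1 := congrArg Real.sqrt hsq
    rwa [Real.sqrt_sq (norm_nonneg _), Real.sqrt_sq (norm_nonneg _)] at h1
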